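/- If the expert π^E is a weak Dominant Strategy Equilibrium, then any behavioral cloning policy π with BC error ε_BC ≤ ε(1−γ)²/(2n) is an ε-Nash equilibrium, i.e. NashGap(π) ≤ ε. -/

import Mathlib

open scoped BigOperators

namespace MAIL

/-- An `n`-player Markov Game with finite state space `S` and finite
per-player action spaces `A i` (joint actions are dependent functions). -/
structure Game (n : ℕ) (S : Type) (A : Fin n → Type) [Fintype S] [∀ i, Fintype (A i)] where
  P : S → (∀ i, A i) → S → ℝ
  r : Fin n → S → (∀ i, A i) → ℝ
  ν₀ : S → ℝ
  γ : ℝ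

variable {n : ℕ} {S : Type} {A : Fin n → Type} [Fintype S] [∀ i, Fintype (A i)]

/-- A (per-player or joint) policy is a probability distribution over actions at each state. -/
def IsPol {B : Type} [Fintype B] (π : S → B → ℝ) : Prop :=
  (∀ s b, 0 ≤ π s b) ∧ ∀ s, ∑ b, π s b = 1

/-- Standard validity assumptions on a game: `γ ∈ [0,1)`, `ν₀` a distribution,
`P` a transition kernel, rewards bounded in `[-1,1]`. -/
def IsGame (G : Game n S A) : Prop :=
  0 ≤ G.γ ∧ G.γ < 1 ∧ (∀ s, 0 ≤ G.ν₀ s) ∧ (∑ s, G.ν₀ s = 1) ∧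
    (∀ s a, (∀ s', 0 ≤ G.P s a s') ∧ ∑ s', G.P s a s' = 1) ∧
    (∀ i s a, |G.r i s a| ≤ 1)

/-- Joint (product) policy induced by independent per-player policies. -/
def joint (π : ∀ i, S → A i → ℝ) : S → (∀ i, A i) → ℝ :=
  fun s a => ∏ i, π i s (a i)

/-- `stateDist G π t s = P(s_t = s)` when rolling out joint policy `π`. -/
def stateDist (G : Game n S A) (π : S → (∀ i, A i) → ℝ) : ℕ → S → ℝ
  | 0 => G.ν₀
  | t + 1 => fun s' => ∑ s : S, ∑ a : (∀ i, A i), stateDist G π t s * π s a * G.P s a s'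

/-- Discounted state occupancy measure `μ_π(s) = (1-γ) ∑_t γ^t P(s_t = s)`. -/
noncomputable def occ (G : Game n S A) (π : S → (∀ i, A i) → ℝ) (s : S) : ℝ :=
  (1 - G.γ) * ∑' t : ℕ, G.γ ^ t * stateDist G π t s

/-- State-action occupancy measure `ρ_π(s,a) = μ_π(s) π(a|s)`. -/
noncomputable def saOcc (G : Game n S A) (π : S → (∀ i, A i) → ℝ)
    (s : S) (a : ∀ i, A i) : ℝ :=
  occ G π s * π s a

/-- Player `i`'s value `V_i^π(ν₀) = (1/(1-γ)) E_{(s,a)∼ρ_π}[r_i(s,a)]`. -/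
noncomputable def value (G : Game n S A) (i : Fin n) (π : S → (∀ i, A i) → ℝ) : ℝ :=
  (1 / (1 - G.γ)) * ∑ s : S, ∑ a : (∀ i, A i), saOcc G π s a * G.r i s a

/-- Player `i`'s value started from the Dirac distribution at state `s`. -/
noncomputable def valueFrom [DecidableEq S] (G : Game n S A) (i : Fin n)
    (π : S → (∀ i, A i) → ℝ) (s₀ : S) : ℝ :=
  value { G with ν₀ := fun s => if s = s₀ then 1 else 0 } i π

/-- State-action value `Q_i^π(s,a) = r_i(s,a) + γ ∑_{s'} P(s'|s,a) V_i^π(s')`. -/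
noncomputable def Qf [DecidableEq S] (G : Game n S A) (i : Fin n)
    (π : S → (∀ i, A i) → ℝ) (s : S) (a : ∀ i, A i) : ℝ :=
  G.r i s a + G.γ * ∑ s' : S, G.P s a s' * valueFrom G i π s'

/-- Unilateral deviation: player `i` switches to `πi'`, the others keep `π`. -/
def dev (π : ∀ i, S → A i → ℝ) (i : Fin n) (πi' : S → A i → ℝ) :
    ∀ j, S → A j → ℝ :=
  Function.update π i πi'

/-- Behavioral-cloning error of player `i`:
`E_{s ∼ μ_{π^E}} ‖π_i(·|s) − π^E_i(·|s)‖₁`. -/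
noncomputable def bcErr (G : Game n S A) (πE π : ∀ i, S → A i → ℝ) (i : Fin n) : ℝ :=
  ∑ s : S, occ G (joint πE) s * ∑ b : A i, |π i s b - πE i s b|

end MAIL

/-!
By dominance of `π^E`, player `i` gains at least as much by playing `π^E_i` against `π_{-i}` as
by any deviation, so its deviation gain is at most `V_i(π^E_i, π_{-i}) - V_i(π)`. Both
`(π^E_i, π_{-i})` and `π` are product policies whose factors have BC error at most `ε_BC`. The
L1 distance between product distributions is at most the sum of the marginal distances, and the
simulation lemma bounds a value difference by `(1 - γ)⁻²` times the expected L1 policy error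
under the occupancy of the reference policy; so both values lie within `n ε_BC / (1 - γ)²` of
`V_i(π^E)`.
-/

namespace MAIL

theorem sum_abs_mul_sub_mul_le {B : Type*} [Fintype B] {p q : B → ℝ} (hp0 : ∀ b, 0 ≤ p b)
    (hp1 : ∑ b, p b = 1) {x y : ℝ} (hy : 0 ≤ y) :
    ∑ b, |x * p b - y * q b| ≤ |x - y| + y * ∑ b, |p b - q b| := by
  calc ∑ b, |x * p b - y * q b|
      = ∑ b, |(x - y) * p b + y * (p b - q b)| := by congr! 2; ring
    _ ≤ ∑ b, (|x - y| * p b + y * |p b - q b|) := by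
      gcongr with b
      refine (abs_add_le _ _).trans_eq ?_
      rw [abs_mul, abs_mul, abs_of_nonneg (hp0 b), abs_of_nonneg hy]
    _ = |x - y| + y * ∑ b, |p b - q b| := by
      rw [Finset.sum_add_distrib, ← Finset.mul_sum, ← Finset.mul_sum, hp1, mul_one]

section ProductDistributions

variable {ι : Type*} [Fintype ι] [DecidableEq ι] {A : ι → Type*}

theorem prod_update_apply (q : ∀ i, A i → ℝ) (j : ι) (g : A j → ℝ) (a : ∀ i, A i) :
    ∏ i, Function.update q j g i (a i) = g (a j) * ∏ i ∈ {j}ᶜ, q i (a i) := by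
  rw [Fintype.prod_eq_mul_prod_compl j, Function.update_self]
  congr 1
  refine Finset.prod_congr rfl fun i hi => ?_
  rw [Function.update_of_ne (by simpa using hi)]

variable [∀ i, Fintype (A i)]

theorem sum_prod_update {q : ∀ i, A i → ℝ} (hq1 : ∀ i, ∑ b, q i b = 1) (j : ι)
    (g : A j → ℝ) :
    ∑ a : ∀ i, A i, ∏ i, Function.update q j g i (a i) = ∑ b, g b := by
  rw [← Fintype.prod_sum, Fintype.prod_eq_mul_prod_compl j, Function.update_self,
    Finset.prod_eq_one fun i hi => by rw [Function.update_of_ne (by simpa using hi), hq1],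
    mul_one]

theorem sum_abs_prod_update_sub_prod {q : ∀ i, A i → ℝ} (hq0 : ∀ i b, 0 ≤ q i b)
    (hq1 : ∀ i, ∑ b, q i b = 1) (j : ι) (g : A j → ℝ) :
    ∑ a : ∀ i, A i, |∏ i, Function.update q j g i (a i) - ∏ i, q i (a i)| =
      ∑ b, |g b - q j b| := by
  rw [← sum_prod_update hq1 j]
  refine Finset.sum_congr rfl fun a _ => ?_
  have hq : ∏ i, q i (a i) = q j (a j) * ∏ i ∈ {j}ᶜ, q i (a i) := by
    simpa using prod_update_apply q j (q j) a
  rw [prod_update_apply, prod_update_apply, hq, ← sub_mul, abs_mul,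
    abs_of_nonneg (Finset.prod_nonneg fun i _ => hq0 i (a i))]

/-- Hybrid argument: the factors of `q` are swapped for those of `p` one at a time. -/
theorem sum_abs_prod_sub_prod_le {p q : ∀ i, A i → ℝ}
    (hp0 : ∀ i b, 0 ≤ p i b) (hp1 : ∀ i, ∑ b, p i b = 1)
    (hq0 : ∀ i b, 0 ≤ q i b) (hq1 : ∀ i, ∑ b, q i b = 1) :
    ∑ a : ∀ i, A i, |∏ i, p i (a i) - ∏ i, q i (a i)| ≤ ∑ i, ∑ b, |p i b - q i b| := by
  suffices ∀ s : Finset ι, ∑ a : ∀ i, A i, |∏ i, s.piecewise p q i (a i) - ∏ i, q i (a i)| ≤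
      ∑ i ∈ s, ∑ b, |p i b - q i b| by
    simpa using this Finset.univ
  intro s
  induction s using Finset.induction_on with
  | empty => simp
  | insert j s hj ih =>
    set h := s.piecewise p q
    have h0 : ∀ i b, 0 ≤ h i b := fun i b => by
      by_cases hi : i ∈ s <;> simp [h, hi, hp0, hq0]
    have h1 : ∀ i, ∑ b, h i b = 1 := fun i => by
      by_cases hi : i ∈ s <;> simp [h, hi, hp1, hq1]
    have hj' : h j = q j := Finset.piecewise_eq_of_notMem _ _ _ hj
    rw [Finset.piecewise_insert, Finset.sum_insert hj]
    calc ∑ a : ∀ i, A i, |∏ i, Function.update h j (p j) i (a i) - ∏ i, q i (a i)|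
        ≤ ∑ a : ∀ i, A i, (|∏ i, Function.update h j (p j) i (a i) - ∏ i, h i (a i)| +
            |∏ i, h i (a i) - ∏ i, q i (a i)|) := by
          gcongr with a
          exact abs_sub_le _ _ _
      _ ≤ ∑ b, |p j b - q j b| + ∑ i ∈ s, ∑ b, |p i b - q i b| := by
          rw [Finset.sum_add_distrib, sum_abs_prod_update_sub_prod h0 h1, hj']
          exact add_le_add_right ih _

end ProductDistributions

theorem tsum_geometric_mul_le_of_le_add {γ : ℝ} (hγ : 0 ≤ γ) {d e : ℕ → ℝ} (hd0 : d 0 = 0)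
    (hde : ∀ t, d (t + 1) ≤ d t + e t) (hd : Summable fun t => γ ^ t * d t)
    (he : Summable fun t => γ ^ t * e t) :
    (1 - γ) * ∑' t, γ ^ t * d t ≤ γ * ∑' t, γ ^ t * e t := by
  have hshift : ∑' t, γ ^ t * d t = ∑' t, γ ^ (t + 1) * d (t + 1) := by
    rw [hd.tsum_eq_zero_add, hd0, mul_zero, zero_add]
  have hsum : Summable fun t => γ * (γ ^ t * d t) + γ * (γ ^ t * e t) :=
    (hd.mul_left γ).add (he.mul_left γ)
  have hle : ∑' t, γ ^ (t + 1) * d (t + 1) ≤ γ * ∑' t, γ ^ t * d t + γ * ∑' t, γ ^ t * e t := by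
    rw [← tsum_mul_left, ← tsum_mul_left, ← (hd.mul_left γ).tsum_add (he.mul_left γ)]
    refine (hd.comp_injective (add_left_injective 1)).tsum_le_tsum (fun t => ?_) hsum
    calc γ ^ (t + 1) * d (t + 1) ≤ γ ^ (t + 1) * (d t + e t) := by gcongr; exact hde t
      _ = γ * (γ ^ t * d t) + γ * (γ ^ t * e t) := by ring
  linarith

namespace IsGame

variable {n : ℕ} {S : Type} {A : Fin n → Type} [Fintype S] [∀ i, Fintype (A i)]
  {G : Game n S A}

theorem γ_nonneg (hG : IsGame G) : 0 ≤ G.γ := hG.1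

theorem γ_lt_one (hG : IsGame G) : G.γ < 1 := hG.2.1

theorem ν₀_nonneg (hG : IsGame G) (s : S) : 0 ≤ G.ν₀ s := hG.2.2.1 s

theorem sum_ν₀ (hG : IsGame G) : ∑ s, G.ν₀ s = 1 := hG.2.2.2.1

theorem P_nonneg (hG : IsGame G) (s : S) (a : ∀ i, A i) (s' : S) : 0 ≤ G.P s a s' :=
  (hG.2.2.2.2.1 s a).1 s'

theorem sum_P (hG : IsGame G) (s : S) (a : ∀ i, A i) : ∑ s', G.P s a s' = 1 :=
  (hG.2.2.2.2.1 s a).2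

theorem abs_r_le (hG : IsGame G) (i : Fin n) (s : S) (a : ∀ i, A i) : |G.r i s a| ≤ 1 :=
  hG.2.2.2.2.2 i s a

end IsGame

section Game

variable {n : ℕ} {S : Type} {A : Fin n → Type} [∀ i, Fintype (A i)]

theorem isPol_joint {π : ∀ i, S → A i → ℝ} (h : ∀ i, IsPol (π i)) : IsPol (joint π) := by
  refine ⟨fun s a => Finset.prod_nonneg fun i _ => (h i).1 s (a i), fun s => ?_⟩
  classical
  simp only [joint, ← Fintype.prod_sum, (h _).2 s, Finset.prod_const_one]

theorem isPol_dev {π : ∀ i, S → A i → ℝ} (hπ : ∀ i, IsPol (π i)) {i : Fin n}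
    {πi' : S → A i → ℝ} (hπi' : IsPol πi') (j : Fin n) : IsPol (dev π i πi' j) := by
  by_cases hj : j = i
  · subst hj; simpa [dev] using hπi'
  · simpa [dev, Function.update_of_ne hj] using hπ j

variable [Fintype S] {G : Game n S A}

theorem sum_sum_sum_mul_P (hG : IsGame G) (w : S → (∀ i, A i) → ℝ) :
    ∑ s', ∑ s, ∑ a, w s a * G.P s a s' = ∑ s, ∑ a, w s a := by
  rw [Finset.sum_comm]
  refine Finset.sum_congr rfl fun s _ => ?_
  rw [Finset.sum_comm]
  simp only [← Finset.mul_sum, hG.sum_P, mul_one]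

variable {π μ ν : S → (∀ i, A i) → ℝ}

theorem stateDist_nonneg (hG : IsGame G) (hπ : IsPol π) (t : ℕ) (s : S) :
    0 ≤ stateDist G π t s := by
  induction t generalizing s with
  | zero => exact hG.ν₀_nonneg s
  | succ t ih =>
    exact Finset.sum_nonneg fun s _ => Finset.sum_nonneg fun a _ =>
      mul_nonneg (mul_nonneg (ih s) (hπ.1 s a)) (hG.P_nonneg s a _)

theorem sum_stateDist (hG : IsGame G) (hπ : IsPol π) (t : ℕ) :
    ∑ s, stateDist G π t s = 1 := by
  induction t with
  | zero => exact hG.sum_ν₀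
  | succ t ih =>
    simp only [stateDist, sum_sum_sum_mul_P hG, ← Finset.mul_sum, hπ.2, mul_one, ih]

theorem stateDist_le_one (hG : IsGame G) (hπ : IsPol π) (t : ℕ) (s : S) :
    stateDist G π t s ≤ 1 :=
  (Finset.single_le_sum (fun s _ => stateDist_nonneg hG hπ t s) (Finset.mem_univ s)).trans_eq
    (sum_stateDist hG hπ t)

theorem summable_stateDist (hG : IsGame G) (hπ : IsPol π) (s : S) :
    Summable fun t => G.γ ^ t * stateDist G π t s :=
  (summable_geometric_of_lt_one hG.γ_nonneg hG.γ_lt_one).of_nonneg_of_le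
    (fun t => mul_nonneg (pow_nonneg hG.γ_nonneg t) (stateDist_nonneg hG hπ t s))
    (fun t => mul_le_of_le_one_right (pow_nonneg hG.γ_nonneg t) (stateDist_le_one hG hπ t s))

theorem occ_nonneg (hG : IsGame G) (hπ : IsPol π) (s : S) : 0 ≤ occ G π s :=
  mul_nonneg (sub_nonneg.2 hG.γ_lt_one.le) <|
    tsum_nonneg fun t => mul_nonneg (pow_nonneg hG.γ_nonneg t) (stateDist_nonneg hG hπ t s)

theorem sum_abs_stateDist_succ_sub_le (hG : IsGame G) (hμ : IsPol μ) (hν : IsPol ν) (t : ℕ) :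
    ∑ s, |stateDist G μ (t + 1) s - stateDist G ν (t + 1) s| ≤
      ∑ s, |stateDist G μ t s - stateDist G ν t s| +
        ∑ s, stateDist G ν t s * ∑ a, |μ s a - ν s a| := by
  calc ∑ s', |stateDist G μ (t + 1) s' - stateDist G ν (t + 1) s'|
      ≤ ∑ s', ∑ s, ∑ a,
          |stateDist G μ t s * μ s a - stateDist G ν t s * ν s a| * G.P s a s' := by
        gcongr with s'
        simp only [stateDist, ← Finset.sum_sub_distrib, ← sub_mul]
        refine (Finset.abs_sum_le_sum_abs _ _).trans <| Finset.sum_le_sum fun s _ =>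
          (Finset.abs_sum_le_sum_abs _ _).trans_eq ?_
        simp only [abs_mul (_ - _), abs_of_nonneg (hG.P_nonneg _ _ s')]
    _ = ∑ s, ∑ a, |stateDist G μ t s * μ s a - stateDist G ν t s * ν s a| :=
        sum_sum_sum_mul_P hG _
    _ ≤ ∑ s, (|stateDist G μ t s - stateDist G ν t s| +
          stateDist G ν t s * ∑ a, |μ s a - ν s a|) := by
        gcongr with s
        exact sum_abs_mul_sub_mul_le (hμ.1 s) (hμ.2 s) (stateDist_nonneg hG hν t s)
    _ = _ := Finset.sum_add_distrib

theorem summable_abs_stateDist_sub (hG : IsGame G) (hμ : IsPol μ) (hν : IsPol ν) (s : S) :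
    Summable fun t => G.γ ^ t * |stateDist G μ t s - stateDist G ν t s| := by
  refine ((summable_stateDist hG hμ s).sub (summable_stateDist hG hν s)).abs.congr fun t => ?_
  rw [← mul_sub, abs_mul, abs_of_nonneg (pow_nonneg hG.γ_nonneg t)]

theorem abs_occ_sub_le (hG : IsGame G) (hμ : IsPol μ) (hν : IsPol ν) (s : S) :
    |occ G μ s - occ G ν s| ≤
      (1 - G.γ) * ∑' t, G.γ ^ t * |stateDist G μ t s - stateDist G ν t s| := by
  have h1γ : 0 ≤ 1 - G.γ := sub_nonneg.2 hG.γ_lt_one.le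
  have hdiff : occ G μ s - occ G ν s =
      (1 - G.γ) * ∑' t, G.γ ^ t * (stateDist G μ t s - stateDist G ν t s) := by
    rw [occ, occ, ← mul_sub, ← (summable_stateDist hG hμ s).tsum_sub (summable_stateDist hG hν s)]
    simp only [mul_sub]
  rw [hdiff, abs_mul, abs_of_nonneg h1γ]
  gcongr
  refine (Real.norm_eq_abs _ ▸ norm_tsum_le_tsum_norm ?_).trans_eq (tsum_congr fun t => ?_)
  · simpa only [Real.norm_eq_abs, abs_mul, abs_of_nonneg (pow_nonneg hG.γ_nonneg _)] using
      summable_abs_stateDist_sub hG hμ hν s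
  · rw [Real.norm_eq_abs, abs_mul, abs_of_nonneg (pow_nonneg hG.γ_nonneg t)]

theorem sum_occ_mul_eq_tsum (hG : IsGame G) (hν : IsPol ν) (L : S → ℝ) :
    ∑ s, occ G ν s * L s = (1 - G.γ) * ∑' t, G.γ ^ t * ∑ s, stateDist G ν t s * L s := by
  have hterm : ∀ t, G.γ ^ t * ∑ s, stateDist G ν t s * L s =
      ∑ s, G.γ ^ t * stateDist G ν t s * L s := fun t => by
    simp only [Finset.mul_sum, mul_assoc]
  rw [tsum_congr hterm,
    Summable.tsum_finsetSum fun s _ => (summable_stateDist hG hν s).mul_right (L s),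
    Finset.mul_sum]
  refine Finset.sum_congr rfl fun s _ => ?_
  rw [occ, mul_assoc, ← tsum_mul_right]

/-- The state distributions drift apart by at most the expected policy error at each step. -/
theorem sum_abs_occ_sub_le (hG : IsGame G) (hμ : IsPol μ) (hν : IsPol ν) :
    (1 - G.γ) * ∑ s, |occ G μ s - occ G ν s| ≤
      G.γ * ∑ s, occ G ν s * ∑ a, |μ s a - ν s a| := by
  set d : ℕ → ℝ := fun t => ∑ s, |stateDist G μ t s - stateDist G ν t s|
  set e : ℕ → ℝ := fun t => ∑ s, stateDist G ν t s * ∑ a, |μ s a - ν s a|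
  have h1γ : 0 ≤ 1 - G.γ := sub_nonneg.2 hG.γ_lt_one.le
  have hd : Summable fun t => G.γ ^ t * d t := by
    simpa only [d, Finset.mul_sum] using
      summable_sum fun s _ => summable_abs_stateDist_sub hG hμ hν s
  have he : Summable fun t => G.γ ^ t * e t := by
    simpa only [e, Finset.mul_sum, mul_assoc] using
      summable_sum fun s _ => (summable_stateDist hG hν s).mul_right (∑ a, |μ s a - ν s a|)
  have hocc : ∑ s, |occ G μ s - occ G ν s| ≤ (1 - G.γ) * ∑' t, G.γ ^ t * d t := by
    refine (Finset.sum_le_sum fun s _ => abs_occ_sub_le hG hμ hν s).trans_eq ?_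
    rw [← Finset.mul_sum,
      ← Summable.tsum_finsetSum fun s _ => summable_abs_stateDist_sub hG hμ hν s]
    simp only [d, Finset.mul_sum]
  have hrec := tsum_geometric_mul_le_of_le_add hG.γ_nonneg (by simp [d, stateDist])
    (sum_abs_stateDist_succ_sub_le hG hμ hν) hd he
  rw [sum_occ_mul_eq_tsum hG hν]
  calc (1 - G.γ) * ∑ s, |occ G μ s - occ G ν s|
      ≤ (1 - G.γ) * ((1 - G.γ) * ∑' t, G.γ ^ t * d t) := by gcongr
    _ ≤ (1 - G.γ) * (G.γ * ∑' t, G.γ ^ t * e t) := by gcongr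
    _ = _ := by ring

theorem abs_value_sub_le_of_occ (hG : IsGame G) (hμ : IsPol μ) (hν : IsPol ν) (i : Fin n) :
    |value G i μ - value G i ν| ≤
      1 / (1 - G.γ) * (∑ s, |occ G μ s - occ G ν s| +
        ∑ s, occ G ν s * ∑ a, |μ s a - ν s a|) := by
  have h1γ : 0 < 1 - G.γ := sub_pos.2 hG.γ_lt_one
  simp only [value, ← mul_sub, ← Finset.sum_sub_distrib, ← sub_mul, abs_mul,
    abs_of_pos (one_div_pos.2 h1γ)]
  gcongr
  calc |∑ s, ∑ a, (saOcc G μ s a - saOcc G ν s a) * G.r i s a|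
      ≤ ∑ s, ∑ a, |saOcc G μ s a - saOcc G ν s a| * |G.r i s a| := by
        refine (Finset.abs_sum_le_sum_abs _ _).trans <| Finset.sum_le_sum fun s _ =>
          (Finset.abs_sum_le_sum_abs _ _).trans_eq ?_
        simp only [abs_mul]
    _ ≤ ∑ s, ∑ a, |occ G μ s * μ s a - occ G ν s * ν s a| := by
        gcongr with s _ a
        exact mul_le_of_le_one_right (abs_nonneg _) (hG.abs_r_le i s a)
    _ ≤ ∑ s, (|occ G μ s - occ G ν s| + occ G ν s * ∑ a, |μ s a - ν s a|) := by
        gcongr with s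
        exact sum_abs_mul_sub_mul_le (hμ.1 s) (hμ.2 s) (occ_nonneg hG hν s)
    _ = _ := Finset.sum_add_distrib

theorem abs_value_sub_le (hG : IsGame G) (hμ : IsPol μ) (hν : IsPol ν) (i : Fin n) :
    |value G i μ - value G i ν| ≤
      1 / (1 - G.γ) ^ 2 * ∑ s, occ G ν s * ∑ a, |μ s a - ν s a| := by
  have h1γ : 0 < 1 - G.γ := sub_pos.2 hG.γ_lt_one
  set C := ∑ s, occ G ν s * ∑ a, |μ s a - ν s a|
  have hDC : ∑ s, |occ G μ s - occ G ν s| + C ≤ C / (1 - G.γ) := by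
    rw [le_div_iff₀ h1γ]
    linarith [sum_abs_occ_sub_le hG hμ hν]
  calc |value G i μ - value G i ν| ≤ 1 / (1 - G.γ) * (C / (1 - G.γ)) :=
        (abs_value_sub_le_of_occ hG hμ hν i).trans (by gcongr)
    _ = 1 / (1 - G.γ) ^ 2 * C := by field_simp

variable {πE ρ : ∀ i, S → A i → ℝ}

theorem abs_value_joint_sub_le (hG : IsGame G) (hρ : ∀ j, IsPol (ρ j))
    (hE : ∀ j, IsPol (πE j)) (i : Fin n) :
    |value G i (joint ρ) - value G i (joint πE)| ≤
      1 / (1 - G.γ) ^ 2 * ∑ j, bcErr G πE ρ j := by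
  refine (abs_value_sub_le hG (isPol_joint hρ) (isPol_joint hE) i).trans ?_
  gcongr
  simp only [bcErr, Finset.sum_comm (γ := Fin n), ← Finset.mul_sum]
  gcongr with s
  · exact occ_nonneg hG (isPol_joint hE) s
  · exact sum_abs_prod_sub_prod_le (fun j => (hρ j).1 s) (fun j => (hρ j).2 s)
      (fun j => (hE j).1 s) (fun j => (hE j).2 s)

theorem bcErr_nonneg (hG : IsGame G) (hE : ∀ j, IsPol (πE j)) (j : Fin n) :
    0 ≤ bcErr G πE ρ j :=
  Finset.sum_nonneg fun s _ => mul_nonneg (occ_nonneg hG (isPol_joint hE) s) <|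
    Finset.sum_nonneg fun _ _ => abs_nonneg _

theorem bcErr_dev_expert_le (hG : IsGame G) (hE : ∀ j, IsPol (πE j)) (i j : Fin n) :
    bcErr G πE (dev ρ i (πE i)) j ≤ bcErr G πE ρ j := by
  by_cases hj : j = i
  · subst hj
    simpa [bcErr, dev] using bcErr_nonneg hG hE j
  · simp [bcErr, dev, Function.update_of_ne hj]

end Game

theorem dse_eps_nash_general {n : ℕ} {S : Type} {A : Fin n → Type}
    [Fintype S] [∀ i, Fintype (A i)]
    (G : Game n S A) (hG : IsGame G)
    (πE π : ∀ i, S → A i → ℝ)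
    (hE : ∀ i, IsPol (πE i)) (hπ : ∀ i, IsPol (π i))
    (hDSE : ∀ (i : Fin n) (ρ : ∀ j, S → A j → ℝ), (∀ j, IsPol (ρ j)) →
      value G i (joint ρ) ≤ value G i (joint (dev ρ i (πE i))))
    (ε εBC : ℝ) (hBC : ∀ i, bcErr G πE π i ≤ εBC)
    (hε : εBC ≤ ε * (1 - G.γ) ^ 2 / (2 * n)) :
    ∀ (i : Fin n) (πi' : S → A i → ℝ), IsPol πi' →
      value G i (joint (dev π i πi')) - value G i (joint π) ≤ ε := by
  intro i πi' hπi'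
  set σ := dev π i (πE i)
  have hdev : value G i (joint (dev π i πi')) ≤ value G i (joint σ) := by
    simpa [σ, dev, Function.update_idem] using hDSE i _ (isPol_dev hπ hπi')
  have hsum : ∀ ρ, (∀ j, bcErr G πE ρ j ≤ εBC) → ∑ j, bcErr G πE ρ j ≤ n * εBC :=
    fun ρ h => by simpa using Finset.sum_le_card_nsmul Finset.univ _ _ fun j _ => h j
  have hσE : |value G i (joint σ) - value G i (joint πE)| ≤ 1 / (1 - G.γ) ^ 2 * (n * εBC) :=
    (abs_value_joint_sub_le hG (isPol_dev hπ (hE i)) hE i).trans <| by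
      gcongr
      exact hsum σ fun j => (bcErr_dev_expert_le hG hE i j).trans (hBC j)
  have hπE : |value G i (joint π) - value G i (joint πE)| ≤ 1 / (1 - G.γ) ^ 2 * (n * εBC) :=
    (abs_value_joint_sub_le hG hπ hE i).trans <| by gcongr; exact hsum π hBC
  have hK : 1 / (1 - G.γ) ^ 2 * (n * εBC) ≤ ε / 2 := by
    have h1γ : 0 < (1 - G.γ) ^ 2 := pow_pos (sub_pos.2 hG.γ_lt_one) 2
    have hn : (0 : ℝ) < n := Nat.cast_pos.2 i.pos
    rw [le_div_iff₀ (by positivity)] at hε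
    rw [one_div_mul_eq_div, div_le_iff₀ h1γ]
    linarith
  linarith [(abs_le.1 hσE).2, (abs_le.1 hπE).1]

/-- if `π^E` is a weak Dominant Strategy Equilibrium, then any
behavioral cloning policy `π` with BC error `ε_BC ≤ ε (1-γ)² / (2n)` is an
`ε`-Nash equilibrium. -/
theorem dse_eps_nash {n : ℕ} {S : Type} {A : Fin n → Type}
    [Fintype S] [∀ i, Fintype (A i)] (hn : 0 < n)
    (G : Game n S A) (hG : IsGame G)
    (πE π : ∀ i, S → A i → ℝ)
    (hE : ∀ i, IsPol (πE i)) (hπ : ∀ i, IsPol (π i))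
    (hDSE : ∀ (i : Fin n) (ρ : ∀ j, S → A j → ℝ), (∀ j, IsPol (ρ j)) →
      value G i (joint ρ) ≤ value G i (joint (dev ρ i (πE i))))
    (ε εBC : ℝ) (hBC : ∀ i, bcErr G πE π i ≤ εBC)
    (hε : εBC ≤ ε * (1 - G.γ) ^ 2 / (2 * n)) :
    ∀ (i : Fin n) (πi' : S → A i → ℝ), IsPol πi' →
      value G i (joint (dev π i πi')) - value G i (joint π) ≤ ε :=
  dse_eps_nash_general G hG πE π hE hπ hDSE ε εBC hBC hε

end MAIL
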